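/- arXiv:2407.14959 — 11 statements merged into one kernel-verified Lean document; each statement's English description precedes it below -/
import Mathlib

section
/- Let ς : T × ℝ^l → ℝ be a function on pairs of n×l right stochastic matrices and vectors in ℝ^l. Suppose (1) for all T and v, w: T·v = T·w implies ς(T,v) = ς(T,w), and (2) for all T, T' and v: T·v = T'·v implies ς(T,v) = ς(T',v). Then for all T, T', v, w: T·v = T'·w implies ς(T,v) = ς(T',w). -/
/-!
Call two pairs `(T, v)` with `T` stochastic and the same image `b = T v` linked when one passes
from one to the other by changing only the matrix or only the vector while keeping the image; `ς` is
constant along such moves, so it suffices to link any two pairs with image `b`. Write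
`b i = (1 - λ i) m + λ i M` with `m = min b`, `M = max b`, and let `mixRows λ p q` have rows
`(1 - λ i) p + λ i q`. A pair `(S, u)` is linked to `(mixRows λ p q, u)` for probability vectors
`p, q` supported on a minimising and a maximising coordinate of `u`, with `p ⬝ u = m` and
`q ⬝ u = M`. As `l ≥ 3`, some coordinate `g` lies outside both supports, so `u g` may be set to `m`;
then `p` may be replaced by the basis vector at `g`, the other entries of `u` set to `M`, and `q`
replaced by any basis vector at `e ≠ g`. The resulting pair depends only on `g` and `e`, and the
pairs for `g₁` and `g₂` are linked through a common `e ∉ {g₁, g₂}`.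
-/

open Matrix

def RightStochastic {n l : ℕ} (T : Matrix (Fin n) (Fin l) ℝ) : Prop :=
  (∀ i j, 0 ≤ T i j) ∧ ∀ i, ∑ j, T i j = 1

open Set Function Relation

theorem rightStochastic_iff_forall_mem_stdSimplex {n l : ℕ} {T : Matrix (Fin n) (Fin l) ℝ} :
    RightStochastic T ↔ ∀ i, T i ∈ stdSimplex ℝ (Fin l) :=
  forall_and.symm

theorem RightStochastic.mulVec_mem_Icc {n l : ℕ} {T : Matrix (Fin n) (Fin l) ℝ}
    (hT : RightStochastic T) {u : Fin l → ℝ} {x y : ℝ} (hu : ∀ j, u j ∈ Icc x y)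
    (i : Fin n) :
    (T *ᵥ u) i ∈ Icc x y := by
  simpa [mulVec, dotProduct] using
    (convex_Icc x y).sum_mem (fun j _ => hT.1 i j) (hT.2 i) (fun j _ => hu j)

theorem exists_mem_Icc_sub_mul_add_mul_eq {x y t : ℝ} (ht : t ∈ Icc x y) :
    ∃ θ ∈ Icc (0 : ℝ) 1, (1 - θ) * x + θ * y = t := by
  simpa [segment_eq_image] using Icc_subset_segment (𝕜 := ℝ) ht

theorem exists_mem_stdSimplex_dotProduct_eq {ι : Type*} [Fintype ι] [DecidableEq ι]
    {u : ι → ℝ} {a c : ι} {t : ℝ} (ht : t ∈ Icc (u a) (u c)) :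
    ∃ p ∈ stdSimplex ℝ ι, (∀ g, g ≠ a → g ≠ c → p g = 0) ∧ p ⬝ᵥ u = t := by
  obtain ⟨α, β, hα, hβ, hαβ, rfl⟩ := Icc_subset_segment (𝕜 := ℝ) ht
  refine ⟨α • Pi.single a 1 + β • Pi.single c 1,
    convex_stdSimplex ℝ ι (single_mem_stdSimplex ℝ a) (single_mem_stdSimplex ℝ c) hα hβ hαβ,
    fun g ha hc => by simp [ha, hc], by simp [add_dotProduct]⟩

theorem dotProduct_update_of_eq_zero {ι : Type*} [Fintype ι] [DecidableEq ι]
    {p u : ι → ℝ} {g : ι} (hg : p g = 0) (x : ℝ) : p ⬝ᵥ update u g x = p ⬝ᵥ u := by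
  refine Finset.sum_congr rfl fun j _ => ?_
  rcases eq_or_ne j g with rfl | hj
  · simp [hg]
  · simp [hj]

theorem dotProduct_const_of_mem_stdSimplex {ι : Type*} [Fintype ι] {p : ι → ℝ}
    (hp : p ∈ stdSimplex ℝ ι) (x : ℝ) : p ⬝ᵥ (fun _ => x) = x := by
  simp [dotProduct, ← Finset.sum_mul, hp.2]

theorem exists_ne_ne_of_three_le {l : ℕ} (hl : 3 ≤ l) (a c : Fin l) :
    ∃ g, g ≠ a ∧ g ≠ c := by
  obtain ⟨g, -, hg⟩ := Finset.exists_mem_notMem_of_card_lt_card (s := {a, c}) (t := Finset.univ)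
    ((Finset.card_le_two).trans_lt (by rw [Finset.card_univ, Fintype.card_fin]; omega))
  simp only [Finset.mem_insert, Finset.mem_singleton, not_or] at hg
  exact ⟨g, hg⟩

def mixRows {m ι : Type*} (lam : m → ℝ) (p q : ι → ℝ) : Matrix m ι ℝ :=
  of fun i => (1 - lam i) • p + lam i • q

theorem mixRows_mulVec {m ι : Type*} [Fintype ι] (lam : m → ℝ) (p q u : ι → ℝ) :
    mixRows lam p q *ᵥ u = fun i => (1 - lam i) * (p ⬝ᵥ u) + lam i * (q ⬝ᵥ u) := by
  ext i
  change ((1 - lam i) • p + lam i • q) ⬝ᵥ u = _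
  rw [add_dotProduct, smul_dotProduct, smul_dotProduct, smul_eq_mul, smul_eq_mul]

theorem rightStochastic_mixRows {n l : ℕ} {lam : Fin n → ℝ} (hlam : ∀ i, lam i ∈ Icc 0 1)
    {p q : Fin l → ℝ} (hp : p ∈ stdSimplex ℝ (Fin l)) (hq : q ∈ stdSimplex ℝ (Fin l)) :
    RightStochastic (mixRows lam p q) :=
  rightStochastic_iff_forall_mem_stdSimplex.2 fun i =>
    convex_stdSimplex ℝ _ hp hq (sub_nonneg.2 (hlam i).2) (hlam i).1 (sub_add_cancel 1 _)

theorem mixRows_mulVec_eq {m ι : Type*} [Fintype ι] {lam b : m → ℝ} {x y : ℝ}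
    (hb : ∀ i, (1 - lam i) * x + lam i * y = b i) {p q u : ι → ℝ} (hp : p ⬝ᵥ u = x)
    (hq : q ⬝ᵥ u = y) : mixRows lam p q *ᵥ u = b := by
  rw [mixRows_mulVec, hp, hq]
  exact funext hb

section Moves

variable {n l : ℕ}

inductive StochasticMove (b : Fin n → ℝ) :
    Matrix (Fin n) (Fin l) ℝ × (Fin l → ℝ) → Matrix (Fin n) (Fin l) ℝ × (Fin l → ℝ) → Prop
  | vec {T v w} : RightStochastic T → T *ᵥ v = b → T *ᵥ w = b → StochasticMove b (T, v) (T, w)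
  | mat {T T' v} : RightStochastic T → RightStochastic T' → T *ᵥ v = b → T' *ᵥ v = b →
      StochasticMove b (T, v) (T', v)

theorem StochasticMove.apply_eq {ς : Matrix (Fin n) (Fin l) ℝ → (Fin l → ℝ) → ℝ}
    (h1 : ∀ T, RightStochastic T → ∀ v w : Fin l → ℝ, T *ᵥ v = T *ᵥ w → ς T v = ς T w)
    (h2 : ∀ T T', RightStochastic T → RightStochastic T' → ∀ v : Fin l → ℝ,
      T *ᵥ v = T' *ᵥ v → ς T v = ς T' v)
    {b : Fin n → ℝ} {x y : Matrix (Fin n) (Fin l) ℝ × (Fin l → ℝ)}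
    (h : EqvGen (StochasticMove b) x y) : ς x.1 x.2 = ς y.1 y.2 := by
  induction h with
  | rel _ _ hxy =>
    cases hxy with
    | vec hT hv hw => exact h1 _ hT _ _ (hv.trans hw.symm)
    | mat hT hT' hv hv' => exact h2 _ _ hT hT' _ (hv.trans hv'.symm)
  | refl => rfl
  | symm _ _ _ ih => exact ih.symm
  | trans _ _ _ _ _ ih ih' => exact ih.trans ih'

def canonicalPair (lam : Fin n → ℝ) (m M : ℝ) (g e : Fin l) :
    Matrix (Fin n) (Fin l) ℝ × (Fin l → ℝ) :=
  (mixRows lam (Pi.single g 1) (Pi.single e 1), update (fun _ => M) g m)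

variable {lam b : Fin n → ℝ} {m M : ℝ}

theorem eqvGen_mixRows_vec (hlam : ∀ i, lam i ∈ Icc 0 1)
    (hb : ∀ i, (1 - lam i) * m + lam i * M = b i) {p q u w : Fin l → ℝ}
    (hp : p ∈ stdSimplex ℝ (Fin l)) (hq : q ∈ stdSimplex ℝ (Fin l))
    (hpu : p ⬝ᵥ u = m) (hqu : q ⬝ᵥ u = M) (hpw : p ⬝ᵥ w = m) (hqw : q ⬝ᵥ w = M) :
    EqvGen (StochasticMove b) (mixRows lam p q, u) (mixRows lam p q, w) :=
  .rel _ _ <| .vec (rightStochastic_mixRows hlam hp hq)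
    (mixRows_mulVec_eq hb hpu hqu) (mixRows_mulVec_eq hb hpw hqw)

theorem eqvGen_mixRows_mat (hlam : ∀ i, lam i ∈ Icc 0 1)
    (hb : ∀ i, (1 - lam i) * m + lam i * M = b i) {p q p' q' u : Fin l → ℝ}
    (hp : p ∈ stdSimplex ℝ (Fin l)) (hq : q ∈ stdSimplex ℝ (Fin l))
    (hp' : p' ∈ stdSimplex ℝ (Fin l)) (hq' : q' ∈ stdSimplex ℝ (Fin l))
    (hpu : p ⬝ᵥ u = m) (hqu : q ⬝ᵥ u = M) (hp'u : p' ⬝ᵥ u = m) (hq'u : q' ⬝ᵥ u = M) :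
    EqvGen (StochasticMove b) (mixRows lam p q, u) (mixRows lam p' q', u) :=
  .rel _ _ <| .mat (rightStochastic_mixRows hlam hp hq) (rightStochastic_mixRows hlam hp' hq')
    (mixRows_mulVec_eq hb hpu hqu) (mixRows_mulVec_eq hb hp'u hq'u)

theorem eqvGen_canonicalPair_of_mixRows (hlam : ∀ i, lam i ∈ Icc 0 1)
    (hb : ∀ i, (1 - lam i) * m + lam i * M = b i) {p q u : Fin l → ℝ}
    (hp : p ∈ stdSimplex ℝ (Fin l)) (hq : q ∈ stdSimplex ℝ (Fin l)) {g e : Fin l}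
    (hpg : p g = 0) (hqg : q g = 0) (heg : e ≠ g) (hpu : p ⬝ᵥ u = m) (hqu : q ⬝ᵥ u = M) :
    EqvGen (StochasticMove b) (mixRows lam p q, u) (canonicalPair lam m M g e) := by
  set z := update u g m
  set y : Fin l → ℝ := update (fun _ => M) g m
  have hpz : p ⬝ᵥ z = m := by rw [dotProduct_update_of_eq_zero hpg, hpu]
  have hqz : q ⬝ᵥ z = M := by rw [dotProduct_update_of_eq_zero hqg, hqu]
  have hgz : Pi.single g 1 ⬝ᵥ z = m := by simp [z]
  have hqy : q ⬝ᵥ y = M := by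
    rw [dotProduct_update_of_eq_zero hqg, dotProduct_const_of_mem_stdSimplex hq]
  have hgy : Pi.single g 1 ⬝ᵥ y = m := by simp [y]
  have hey : Pi.single e 1 ⬝ᵥ y = M := by simp [y, heg]
  have hδg := single_mem_stdSimplex ℝ g
  have hδe := single_mem_stdSimplex ℝ e
  calc EqvGen (StochasticMove b) (mixRows lam p q, u) (mixRows lam p q, z) :=
        eqvGen_mixRows_vec hlam hb hp hq hpu hqu hpz hqz
    EqvGen (StochasticMove b) _ (mixRows lam (Pi.single g 1) q, z) :=
        eqvGen_mixRows_mat hlam hb hp hq hδg hq hpz hqz hgz hqz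
    EqvGen (StochasticMove b) _ (mixRows lam (Pi.single g 1) q, y) :=
        eqvGen_mixRows_vec hlam hb hδg hq hgz hqz hgy hqy
    EqvGen (StochasticMove b) _ (canonicalPair lam m M g e) :=
        eqvGen_mixRows_mat hlam hb hδg hq hδg hδe hgy hqy hgy hey

theorem exists_eqvGen_canonicalPair (hl : 3 ≤ l) {S : Matrix (Fin n) (Fin l) ℝ}
    {u : Fin l → ℝ} (hS : RightStochastic S) (hSu : S *ᵥ u = b) (hlam : ∀ i, lam i ∈ Icc 0 1)
    (hb : ∀ i, (1 - lam i) * m + lam i * M = b i) (hm : m ∈ range b) (hM : M ∈ range b) :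
    ∃ g, ∀ e ≠ g, EqvGen (StochasticMove b) (S, u) (canonicalPair lam m M g e) := by
  have : Nonempty (Fin l) := Fin.pos_iff_nonempty.1 (by omega)
  obtain ⟨a, ha⟩ := Finite.exists_min u
  obtain ⟨c, hc⟩ := Finite.exists_max u
  have hrange : ∀ x ∈ range b, x ∈ Icc (u a) (u c) := by
    rintro _ ⟨i, rfl⟩
    rw [← hSu]
    exact hS.mulVec_mem_Icc (fun j => ⟨ha j, hc j⟩) i
  obtain ⟨g, hga, hgc⟩ := exists_ne_ne_of_three_le hl a c
  obtain ⟨p, hp, hp0, hpu⟩ := exists_mem_stdSimplex_dotProduct_eq (hrange m hm)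
  obtain ⟨q, hq, hq0, hqu⟩ := exists_mem_stdSimplex_dotProduct_eq (hrange M hM)
  have hSR : StochasticMove b (S, u) (mixRows lam p q, u) :=
    .mat hS (rightStochastic_mixRows hlam hp hq) hSu (mixRows_mulVec_eq hb hpu hqu)
  exact ⟨g, fun e heg => .trans _ _ _ (.rel _ _ hSR) <| eqvGen_canonicalPair_of_mixRows hlam hb
    hp hq (hp0 g hga hgc) (hq0 g hga hgc) heg hpu hqu⟩

theorem eqvGen_canonicalPair (hlam : ∀ i, lam i ∈ Icc 0 1)
    (hb : ∀ i, (1 - lam i) * m + lam i * M = b i) {g₁ g₂ e : Fin l} (h₁ : e ≠ g₁) (h₂ : e ≠ g₂) :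
    EqvGen (StochasticMove b) (canonicalPair lam m M g₁ e) (canonicalPair lam m M g₂ e) := by
  set z : Fin l → ℝ := update (fun _ => m) e M
  have hez : Pi.single e 1 ⬝ᵥ z = M := by simp [z]
  have hg₁z : Pi.single g₁ 1 ⬝ᵥ z = m := by simp [z, h₁.symm]
  have hg₂z : Pi.single g₂ 1 ⬝ᵥ z = m := by simp [z, h₂.symm]
  have hδe := single_mem_stdSimplex ℝ e
  have hδ₁ := single_mem_stdSimplex ℝ g₁
  have hδ₂ := single_mem_stdSimplex ℝ g₂
  calc EqvGen (StochasticMove b) (canonicalPair lam m M g₁ e)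
        (mixRows lam (Pi.single g₁ 1) (Pi.single e 1), z) :=
        eqvGen_mixRows_vec hlam hb hδ₁ hδe (by simp) (by simp [h₁]) hg₁z hez
    EqvGen (StochasticMove b) _ (mixRows lam (Pi.single g₂ 1) (Pi.single e 1), z) :=
        eqvGen_mixRows_mat hlam hb hδ₁ hδe hδ₂ hδe hg₁z hez hg₂z hez
    EqvGen (StochasticMove b) _ (canonicalPair lam m M g₂ e) :=
        eqvGen_mixRows_vec hlam hb hδ₂ hδe hg₂z hez (by simp) (by simp [h₂])

theorem eqvGen_stochasticMove_of_mulVec_eq (hn : 1 ≤ n) (hl : 3 ≤ l)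
    {T T' : Matrix (Fin n) (Fin l) ℝ} (hT : RightStochastic T) (hT' : RightStochastic T')
    {v w : Fin l → ℝ} (hvw : T *ᵥ v = T' *ᵥ w) :
    EqvGen (StochasticMove (T *ᵥ v)) (T, v) (T', w) := by
  have : Nonempty (Fin n) := Fin.pos_iff_nonempty.1 hn
  set b := T *ᵥ v
  obtain ⟨i₀, hi₀⟩ := Finite.exists_min b
  obtain ⟨i₁, hi₁⟩ := Finite.exists_max b
  choose lam hlam hb using fun i => exists_mem_Icc_sub_mul_add_mul_eq ⟨hi₀ i, hi₁ i⟩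
  obtain ⟨g₁, hg₁⟩ := exists_eqvGen_canonicalPair hl hT rfl hlam hb ⟨i₀, rfl⟩ ⟨i₁, rfl⟩
  obtain ⟨g₂, hg₂⟩ := exists_eqvGen_canonicalPair hl hT' hvw.symm hlam hb ⟨i₀, rfl⟩ ⟨i₁, rfl⟩
  obtain ⟨e, he₁, he₂⟩ := exists_ne_ne_of_three_le hl g₁ g₂
  exact .trans _ _ _ (hg₁ e he₁) <|
    .trans _ _ _ (eqvGen_canonicalPair hlam hb he₁ he₂) (.symm _ _ (hg₂ e he₂))

end Moves

theorem stmt_0 (n l : ℕ) (hn : 1 ≤ n) (hl : 3 ≤ l)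
    (ς : Matrix (Fin n) (Fin l) ℝ → (Fin l → ℝ) → ℝ)
    (h1 : ∀ T, RightStochastic T → ∀ v w : Fin l → ℝ,
      T.mulVec v = T.mulVec w → ς T v = ς T w)
    (h2 : ∀ T T', RightStochastic T → RightStochastic T' → ∀ v : Fin l → ℝ,
      T.mulVec v = T'.mulVec v → ς T v = ς T' v) :
    ∀ T T', RightStochastic T → RightStochastic T' → ∀ v w : Fin l → ℝ,
      T.mulVec v = T'.mulVec w → ς T v = ς T' w :=
  fun _ _ hT hT' _ _ hvw =>
    StochasticMove.apply_eq h1 h2 (eqvGen_stochasticMove_of_mulVec_eq hn hl hT hT' hvw)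
end

section
/- Let ς satisfy the two unanimity conditions of Lemma A.1 (T·v = T·w ⟹ ς(T,v) = ς(T,w), and T·v = T'·v ⟹ ς(T,v) = ς(T',v)). Suppose v = k·e_j + b·1_l and w = k'·e_{j'} + b'·1_l with k, k' > 0 and b, b' real, where e_j is the j-th standard basis vector. Then T·v = T'·w implies ς(T,v) = ς(T',w). -/
open Matrix

namespace StmtAux

noncomputable def ind {l : ℕ} (j : Fin l) : Fin l → ℝ := fun r => if r = j then 1 else 0

lemma ind_nonneg {l : ℕ} (j r : Fin l) : 0 ≤ ind j r := by
  simp only [ind]; split <;> norm_num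

lemma sum_ind {l : ℕ} (j : Fin l) : ∑ r, ind j r = 1 := by
  simp [ind]

lemma dot_ind {l : ℕ} (j : Fin l) (q : Fin l → ℝ) : ∑ r, ind j r * q r = q j := by
  simp [ind, ite_mul]

noncomputable def Mk3 {n l : ℕ} (a d : Fin n → ℝ) (j j' m : Fin l) :
    Matrix (Fin n) (Fin l) ℝ :=
  fun i r => a i * ind j r + d i * ind j' r + (1 - a i - d i) * ind m r

lemma Mk3_stoch {n l : ℕ} (a d : Fin n → ℝ) (j j' m : Fin l)
    (ha : ∀ i, 0 ≤ a i) (hd : ∀ i, 0 ≤ d i) (had : ∀ i, a i + d i ≤ 1) :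
    RightStochastic (Mk3 a d j j' m) := by
  constructor
  · intro i r
    have h1 := ind_nonneg j r; have h2 := ind_nonneg j' r; have h3 := ind_nonneg m r
    have h4 := ha i; have h5 := hd i; have h6 := had i
    unfold Mk3
    have h7 : 0 ≤ 1 - a i - d i := by linarith
    positivity
  · intro i
    simp only [Mk3]
    rw [Finset.sum_add_distrib, Finset.sum_add_distrib, ← Finset.mul_sum, ← Finset.mul_sum,
      ← Finset.mul_sum, sum_ind, sum_ind, sum_ind]
    ring

lemma Mk3_mulVec {n l : ℕ} (a d : Fin n → ℝ) (j j' m : Fin l) (q : Fin l → ℝ) (i : Fin n) :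
    (Mk3 a d j j' m).mulVec q i = a i * q j + d i * q j' + (1 - a i - d i) * q m := by
  simp only [Mk3, Matrix.mulVec, dotProduct, add_mul, Finset.sum_add_distrib, mul_assoc,
    ← Finset.mul_sum, dot_ind]

lemma stoch_mulVec_basis {n l : ℕ} {T : Matrix (Fin n) (Fin l) ℝ} (hT : RightStochastic T)
    (j : Fin l) (k b : ℝ) (i : Fin n) :
    T.mulVec (fun r => k * (if r = j then 1 else 0) + b) i = k * T i j + b := by
  simp only [Matrix.mulVec, dotProduct, mul_add, mul_ite, mul_one, mul_zero,
    Finset.sum_add_distrib, Finset.sum_ite_eq', Finset.mem_univ, if_true]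
  rw [← Finset.sum_mul, hT.2 i]
  ring

lemma entry_le_one {n l : ℕ} {T : Matrix (Fin n) (Fin l) ℝ} (hT : RightStochastic T)
    (i : Fin n) (j : Fin l) : T i j ≤ 1 := by
  have := Finset.single_le_sum (f := T i) (fun r _ => hT.1 i r) (Finset.mem_univ j)
  rw [hT.2 i] at this; exact this

lemma exists_third {l : ℕ} (hl : 3 ≤ l) (j j' : Fin l) : ∃ m : Fin l, m ≠ j ∧ m ≠ j' := by
  by_contra hc
  push_neg at hc
  have hsub : (Finset.univ : Finset (Fin l)) ⊆ {j, j'} := by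
    intro x _
    simp only [Finset.mem_insert, Finset.mem_singleton]
    rcases eq_or_ne x j with h | h
    · exact Or.inl h
    · exact Or.inr (hc x h)
  have hcard := Finset.card_le_card hsub
  have h2 : ({j, j'} : Finset (Fin l)).card ≤ 2 :=
    (Finset.card_insert_le _ _).trans (by simp)
  simp [Finset.card_univ] at hcard
  omega

theorem core (n l : ℕ) (hn : 1 ≤ n) (hl : 3 ≤ l)
    (ς : Matrix (Fin n) (Fin l) ℝ → (Fin l → ℝ) → ℝ)
    (h1 : ∀ T, RightStochastic T → ∀ v w : Fin l → ℝ,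
      T.mulVec v = T.mulVec w → ς T v = ς T w)
    (h2 : ∀ T T', RightStochastic T → RightStochastic T' → ∀ v : Fin l → ℝ,
      T.mulVec v = T'.mulVec v → ς T v = ς T' v)
    (T T' : Matrix (Fin n) (Fin l) ℝ) (hT : RightStochastic T) (hT' : RightStochastic T')
    (j j' : Fin l) (hjj : j ≠ j') (k k' b b' : ℝ) (hk : 0 < k) (hk' : 0 < k')
    (hb : b ≤ b')
    (v w : Fin l → ℝ)
    (hv : v = fun m => k * (if m = j then 1 else 0) + b)
    (hw : w = fun m => k' * (if m = j' then 1 else 0) + b')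
    (h : T.mulVec v = T'.mulVec w) :
    ς T v = ς T' w := by
  obtain ⟨m, hmj, hmj'⟩ := exists_third hl j j'
  have i0 : Fin n := ⟨0, hn⟩
  have hTv : ∀ i, T.mulVec v i = k * T i j + b := by
    intro i; rw [hv]; exact stoch_mulVec_basis hT j k b i
  have hT'w : ∀ i, T'.mulVec w i = k' * T' i j' + b' := by
    intro i; rw [hw]; exact stoch_mulVec_basis hT' j' k' b' i
  have key : ∀ i, k * T i j + b = k' * T' i j' + b' := by
    intro i; rw [← hTv i, ← hT'w i, h]
  have hPk : b' - b ≤ k := by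
    have h1 := key i0
    have h2 := entry_le_one hT i0 j
    have h3 := hT'.1 i0 j'
    nlinarith
  -- choose r
  haveI : Nonempty (Fin n) := ⟨⟨0, hn⟩⟩
  set D : ℝ := Finset.univ.sup' Finset.univ_nonempty (fun i => T' i j') with hD_def
  have hDge : ∀ i, T' i j' ≤ D := fun i =>
    Finset.le_sup' (f := fun i => T' i j') (Finset.mem_univ i)
  have hD1 : D ≤ 1 := Finset.sup'_le _ _ (fun i _ => entry_le_one hT' i j')
  have hD0 : 0 ≤ D := le_trans (hT'.1 i0 j') (hDge i0)
  obtain ⟨r, hc1, hc2⟩ : ∃ r : ℝ, (∀ i, T' i j' * r ≤ b' - b) ∧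
      (∀ i, T' i j' * (k - r) ≤ k - (b' - b)) := by
    by_cases hD : D = 0
    · refine ⟨0, fun i => ?_, fun i => ?_⟩
      · have hδ0 : T' i j' = 0 := le_antisymm (hD ▸ hDge i) (hT'.1 i j')
        simp [hδ0]; linarith
      · have hδ0 : T' i j' = 0 := le_antisymm (hD ▸ hDge i) (hT'.1 i j')
        simp [hδ0]; linarith
    · have hDpos : 0 < D := lt_of_le_of_ne hD0 (Ne.symm hD)
      refine ⟨(b' - b) / D, fun i => ?_, fun i => ?_⟩
      · have hq : 0 ≤ (b' - b) / D := div_nonneg (by linarith) hDpos.le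
        calc T' i j' * ((b' - b) / D) ≤ D * ((b' - b) / D) :=
              mul_le_mul_of_nonneg_right (hDge i) hq
          _ = b' - b := by field_simp
      · rcases le_or_gt (k - (b' - b) / D) 0 with hle | hpos
        · have hnp : T' i j' * (k - (b' - b) / D) ≤ 0 :=
            mul_nonpos_of_nonneg_of_nonpos (hT'.1 i j') hle
          linarith
        · calc T' i j' * (k - (b' - b) / D) ≤ D * (k - (b' - b) / D) :=
              mul_le_mul_of_nonneg_right (hDge i) hpos.le
            _ = D * k - (b' - b) := by field_simp
            _ ≤ k - (b' - b) := by nlinarith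
  -- construction
  set a : Fin n → ℝ := fun i => T i j - T' i j' * ((r + k') / k) with ha_def
  have hka : ∀ i, k * a i = k * T i j - T' i j' * (r + k') := by
    intro i; rw [ha_def]; field_simp
  have ha0 : ∀ i, 0 ≤ a i := by
    intro i
    have h3 : T' i j' * (r + k') ≤ k * T i j := by
      have e : T' i j' * (r + k') = T' i j' * r + T' i j' * k' := by ring
      have := hc1 i; have := key i
      linarith
    have := hka i
    nlinarith
  have had1 : ∀ i, a i + T' i j' ≤ 1 := by
    intro i
    have h3 := hc2 i
    have h4 := key i
    have h5 := hka i
    nlinarith [hk]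
  set M : Matrix (Fin n) (Fin l) ℝ := Mk3 a (fun i => T' i j') j j' m with hM_def
  set M₁ : Matrix (Fin n) (Fin l) ℝ := Mk3 (fun i => T i j) (fun _ => 0) j j' m with hM1_def
  have hM1 : RightStochastic M₁ :=
    Mk3_stoch _ _ _ _ _ (fun i => hT.1 i j) (fun _ => le_refl 0)
      (fun i => by simpa using entry_le_one hT i j)
  have hM : RightStochastic M :=
    Mk3_stoch _ _ _ _ _ ha0 (fun i => hT'.1 i j') had1
  set Q₁ : Fin l → ℝ := fun t => k * ind j t + (r + k') * ind j' t + b with hQ_def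
  have hvj : v j = k + b := by rw [hv]; simp
  have hvm : v m = b := by rw [hv]; simp [hmj]
  have hwj : w j = b' := by rw [hw]; simp [hjj]
  have hwj' : w j' = k' + b' := by rw [hw]; simp
  have hwm : w m = b' := by rw [hw]; simp [hmj']
  have hQj : Q₁ j = k + b := by rw [hQ_def]; simp [ind, hjj]
  have hQj' : Q₁ j' = (r + k') + b := by rw [hQ_def]; simp [ind, Ne.symm hjj]
  have hQm : Q₁ m = b := by rw [hQ_def]; simp [ind, hmj, hmj']
  have step1 : ς T v = ς M₁ v := by
    refine h2 T M₁ hT hM1 v (funext fun i => ?_)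
    rw [hTv i, hM1_def, Mk3_mulVec, hvj, hvm]; ring
  have step2 : ς M₁ v = ς M₁ Q₁ := by
    refine h1 M₁ hM1 v Q₁ (funext fun i => ?_)
    rw [hM1_def, Mk3_mulVec, Mk3_mulVec, hvj, hvm, hQj, hQm]; ring
  have step3 : ς M₁ Q₁ = ς M Q₁ := by
    refine h2 M₁ M hM1 hM Q₁ (funext fun i => ?_)
    rw [hM1_def, hM_def, Mk3_mulVec, Mk3_mulVec, hQj, hQj', hQm]
    linear_combination - hka i
  have step4 : ς M Q₁ = ς M w := by
    refine h1 M hM Q₁ w (funext fun i => ?_)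
    rw [hM_def, Mk3_mulVec, Mk3_mulVec, hQj, hQj', hQm, hwj, hwj', hwm]
    linear_combination hka i + key i
  have step5 : ς M w = ς T' w := by
    refine (h2 T' M hT' hM w (funext fun i => ?_)).symm
    rw [hT'w i, hM_def, Mk3_mulVec, hwj, hwj', hwm]; ring
  rw [step1, step2, step3, step4, step5]



theorem coreB (n l : ℕ) (hn : 1 ≤ n) (hl : 3 ≤ l)
    (ς : Matrix (Fin n) (Fin l) ℝ → (Fin l → ℝ) → ℝ)
    (h1 : ∀ T, RightStochastic T → ∀ v w : Fin l → ℝ,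
      T.mulVec v = T.mulVec w → ς T v = ς T w)
    (h2 : ∀ T T', RightStochastic T → RightStochastic T' → ∀ v : Fin l → ℝ,
      T.mulVec v = T'.mulVec v → ς T v = ς T' v)
    (T T' : Matrix (Fin n) (Fin l) ℝ) (hT : RightStochastic T) (hT' : RightStochastic T')
    (j j' : Fin l) (hjj : j ≠ j') (k k' b b' : ℝ) (hk : 0 < k) (hk' : 0 < k')
    (v w : Fin l → ℝ)
    (hv : v = fun m => k * (if m = j then 1 else 0) + b)
    (hw : w = fun m => k' * (if m = j' then 1 else 0) + b')
    (h : T.mulVec v = T'.mulVec w) :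
    ς T v = ς T' w := by
  rcases le_total b b' with hb | hb
  · exact core n l hn hl ς h1 h2 T T' hT hT' j j' hjj k k' b b' hk hk' hb v w hv hw h
  · exact (core n l hn hl ς h1 h2 T' T hT' hT j' j (Ne.symm hjj) k' k b' b hk' hk hb
      w v hw hv h.symm).symm

end StmtAux

theorem stmt_1 (n l : ℕ) (hn : 1 ≤ n) (hl : 3 ≤ l)
    (ς : Matrix (Fin n) (Fin l) ℝ → (Fin l → ℝ) → ℝ)
    (h1 : ∀ T, RightStochastic T → ∀ v w : Fin l → ℝ,
      T.mulVec v = T.mulVec w → ς T v = ς T w)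
    (h2 : ∀ T T', RightStochastic T → RightStochastic T' → ∀ v : Fin l → ℝ,
      T.mulVec v = T'.mulVec v → ς T v = ς T' v)
    (T T' : Matrix (Fin n) (Fin l) ℝ) (hT : RightStochastic T) (hT' : RightStochastic T')
    (j j' : Fin l) (k k' b b' : ℝ) (hk : 0 < k) (hk' : 0 < k')
    (v w : Fin l → ℝ)
    (hv : v = fun m => k * (if m = j then 1 else 0) + b)
    (hw : w = fun m => k' * (if m = j' then 1 else 0) + b')
    (h : T.mulVec v = T'.mulVec w) :
    ς T v = ς T' w := by
  open StmtAux in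
  by_cases hjj : j = j'
  · -- reduce to a basis vector at a fresh column m'
    obtain ⟨m, hmj, -⟩ := StmtAux.exists_third hl j j
    obtain ⟨m', hm'j, hm'm⟩ := StmtAux.exists_third hl j m
    have hTv : ∀ i, T.mulVec v i = k * T i j + b := by
      intro i; rw [hv]; exact StmtAux.stoch_mulVec_basis hT j k b i
    set α : Fin n → ℝ := fun i => T i j with hα_def
    set M₁ : Matrix (Fin n) (Fin l) ℝ := StmtAux.Mk3 α (fun _ => 0) j j m with hM1_def
    set ML : Matrix (Fin n) (Fin l) ℝ := StmtAux.Mk3 α (fun _ => 0) m' j m with hML_def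
    have hM1 : RightStochastic M₁ :=
      StmtAux.Mk3_stoch _ _ _ _ _ (fun i => hT.1 i j) (fun _ => le_refl 0)
        (fun i => by simpa using StmtAux.entry_le_one hT i j)
    have hML : RightStochastic ML :=
      StmtAux.Mk3_stoch _ _ _ _ _ (fun i => hT.1 i j) (fun _ => le_refl 0)
        (fun i => by simpa using StmtAux.entry_le_one hT i j)
    set u : Fin l → ℝ := fun t => (-k) * StmtAux.ind m t + (k + b) with hu_def
    set vL : Fin l → ℝ := fun t => k * (if t = m' then 1 else 0) + b with hvL_def
    have hvj : v j = k + b := by rw [hv]; simp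
    have hvm : v m = b := by rw [hv]; simp [hmj]
    have huj : u j = k + b := by
      rw [hu_def]; simp [StmtAux.ind, Ne.symm hmj]
    have hum : u m = b := by rw [hu_def]; simp [StmtAux.ind]
    have hum' : u m' = k + b := by
      rw [hu_def]; simp [StmtAux.ind, hm'm]
    have hvLj : vL j = b := by rw [hvL_def]; simp [Ne.symm hm'j]
    have hvLm : vL m = b := by rw [hvL_def]; simp [Ne.symm hm'm]
    have hvLm' : vL m' = k + b := by rw [hvL_def]; simp
    have s1 : ς T v = ς M₁ v := by
      refine h2 T M₁ hT hM1 v (funext fun i => ?_)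
      rw [hTv i, hM1_def, StmtAux.Mk3_mulVec, hvj, hvm]; ring
    have s2 : ς M₁ v = ς M₁ u := by
      refine h1 M₁ hM1 v u (funext fun i => ?_)
      rw [hM1_def, StmtAux.Mk3_mulVec, StmtAux.Mk3_mulVec, hvj, hvm, huj, hum]
    have s3 : ς M₁ u = ς ML u := by
      refine h2 M₁ ML hM1 hML u (funext fun i => ?_)
      rw [hM1_def, hML_def, StmtAux.Mk3_mulVec, StmtAux.Mk3_mulVec, huj, hum, hum']
    have s4 : ς ML u = ς ML vL := by
      refine h1 ML hML u vL (funext fun i => ?_)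
      rw [hML_def, StmtAux.Mk3_mulVec, StmtAux.Mk3_mulVec, huj, hum, hum', hvLj, hvLm, hvLm']
      ring
    have s5 : ς ML vL = ς T' w := by
      refine StmtAux.coreB n l hn hl ς h1 h2 ML T' hML hT' m' j' ?_ k k' b b' hk hk'
        vL w hvL_def hw (funext fun i => ?_)
      · rw [← hjj]; exact hm'j
      · have hMLvL : ML.mulVec vL i = k * T i j + b := by
          rw [hML_def, StmtAux.Mk3_mulVec, hvLj, hvLm, hvLm']; ring
        rw [hMLvL, ← hTv i, h]
    rw [s1, s2, s3, s4, s5]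
  · exact StmtAux.coreB n l hn hl ς h1 h2 T T' hT hT' j j' hjj k k' b b' hk hk' v w hv hw h
end

section
/- Let μ₁, ..., μₙ be probability measures on a finite set Ω and let E ⊆ Ω be an event with 0 < μ_i(E) < 1 for all i. Suppose the experts agree outside E: μ_i({ω}) = μ_j({ω}) for all ω ∉ E and all i, j. Then any subset P* of the convex hull of {μ₁,...,μₙ} is rectangular with respect to the partition {E, Eᶜ}: for all p¹, p², p³ ∈ P*, there exists p⁴ ∈ P* such that for every event F, p⁴(F) = p³(E)·p¹(F|E) + p³(Eᶜ)·p²(F|Eᶜ). -/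
/-!
Every member of the convex hull of the experts' beliefs is a probability vector agreeing with
the experts off `E`. Hence all of them give `E` the same mass and coincide on subsets of `Eᶜ`,
so the combination `p³(E)·p¹(·|E) + p³(Eᶜ)·p²(·|Eᶜ)` is just `p¹` again and one may take `p⁴ = p¹`.
-/

def IsProb {Ω : Type*} [Fintype Ω] (p : Ω → ℝ) : Prop :=
  (∀ ω, 0 ≤ p ω) ∧ ∑ ω, p ω = 1

def prMass {Ω : Type*} [Fintype Ω] (p : Ω → ℝ) (E : Finset Ω) : ℝ := ∑ ω ∈ E, p ω

section

open Set

variable {Ω : Type*}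

lemma eqOn_of_mem_convexHull {s : Set (Ω → ℝ)} {t : Set Ω} {q : Ω → ℝ}
    (hs : ∀ p ∈ s, EqOn p q t) {p : Ω → ℝ} (hp : p ∈ convexHull ℝ s) : EqOn p q t :=
  convexHull_min (t := t.pi fun ω => {q ω}) (fun p hps _ hω => hs p hps hω)
    (convex_pi fun _ _ => convex_singleton _) hp

variable [Fintype Ω]

lemma IsProb.of_mem_convexHull {s : Set (Ω → ℝ)} (hs : ∀ p ∈ s, IsProb p) {p : Ω → ℝ}
    (hp : p ∈ convexHull ℝ s) : IsProb p :=
  convexHull_min hs (convex_stdSimplex ℝ Ω) hp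

lemma prMass_congr {p q : Ω → ℝ} {F : Finset Ω} (h : EqOn p q F) : prMass p F = prMass q F :=
  Finset.sum_congr rfl fun _ hω => h hω

variable [DecidableEq Ω]

lemma prMass_add_prMass_compl (p : Ω → ℝ) (E : Finset Ω) :
    prMass p E + prMass p Eᶜ = ∑ ω, p ω :=
  Finset.sum_add_sum_compl E p

lemma prMass_inter_add_prMass_compl_inter (p : Ω → ℝ) (E F : Finset Ω) :
    prMass p (E ∩ F) + prMass p (Eᶜ ∩ F) = prMass p F := by
  rw [prMass, prMass, prMass, Finset.inter_comm E, Finset.inter_comm Eᶜ,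
    ← Finset.sdiff_eq_inter_compl, Finset.sum_inter_add_sum_sdiff]

lemma prMass_compl_inter_congr {p q : Ω → ℝ} {E : Finset Ω} (h : EqOn p q (↑E)ᶜ)
    (F : Finset Ω) : prMass p (Eᶜ ∩ F) = prMass q (Eᶜ ∩ F) :=
  prMass_congr fun ω hω => h (by simpa using (Finset.mem_inter.mp hω).1)

lemma prMass_compl_congr {p q : Ω → ℝ} {E : Finset Ω} (h : EqOn p q (↑E)ᶜ) :
    prMass p Eᶜ = prMass q Eᶜ := by
  simpa using prMass_compl_inter_congr h Finset.univ

lemma prMass_congr_of_eqOn_compl {p q : Ω → ℝ} {E : Finset Ω} (h : EqOn p q (↑E)ᶜ)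
    (htot : ∑ ω, p ω = ∑ ω, q ω) : prMass p E = prMass q E := by
  have hp := prMass_add_prMass_compl p E
  have hq := prMass_add_prMass_compl q E
  linarith [prMass_compl_congr h]

lemma prMass_eq_condMix_of_eqOn_compl {p₁ p₂ p₃ : Ω → ℝ} {E : Finset Ω}
    (h₁₂ : EqOn p₁ p₂ (↑E)ᶜ) (h₁₃ : EqOn p₁ p₃ (↑E)ᶜ) (htot : ∑ ω, p₁ ω = ∑ ω, p₃ ω)
    (h₁ : prMass p₁ E ≠ 0) (h₂ : prMass p₂ Eᶜ ≠ 0) (F : Finset Ω) :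
    prMass p₁ F = prMass p₃ E * (prMass p₁ (E ∩ F) / prMass p₁ E)
      + prMass p₃ Eᶜ * (prMass p₂ (Eᶜ ∩ F) / prMass p₂ Eᶜ) := by
  rw [← prMass_compl_congr h₁₂] at h₂
  rw [← prMass_congr_of_eqOn_compl h₁₃ htot, ← prMass_compl_congr h₁₃,
    ← prMass_compl_congr h₁₂, ← prMass_compl_inter_congr h₁₂,
    mul_div_cancel₀ _ h₁, mul_div_cancel₀ _ h₂, prMass_inter_add_prMass_compl_inter]

end

theorem stmt_2 {Ω : Type*} [Fintype Ω] [DecidableEq Ω] (n : ℕ)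
    (μ : Fin n → Ω → ℝ) (hμ : ∀ i, IsProb (μ i)) (E : Finset Ω)
    (hE : ∀ i, 0 < prMass (μ i) E ∧ prMass (μ i) E < 1)
    (hagree : ∀ ω ∉ E, ∀ i j, μ i ω = μ j ω)
    (P : Set (Ω → ℝ)) (hP : P ⊆ convexHull ℝ (Set.range μ)) :
    ∀ p1 ∈ P, ∀ p2 ∈ P, ∀ p3 ∈ P, ∃ p4 ∈ P, ∀ F : Finset Ω,
      prMass p4 F = prMass p3 E * (prMass p1 (E ∩ F) / prMass p1 E)
        + prMass p3 Eᶜ * (prMass p2 (Eᶜ ∩ F) / prMass p2 Eᶜ) := by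
  intro p1 hp1 p2 hp2 p3 hp3
  obtain ⟨_, i, rfl⟩ := convexHull_nonempty_iff.mp ⟨p1, hP hp1⟩
  have hprob : ∀ p ∈ P, IsProb p := fun p hp =>
    IsProb.of_mem_convexHull (by rintro _ ⟨j, rfl⟩; exact hμ j) (hP hp)
  have heq : ∀ p ∈ P, Set.EqOn p (μ i) (↑E)ᶜ := fun p hp =>
    eqOn_of_mem_convexHull (by rintro _ ⟨j, rfl⟩ ω hω; exact hagree ω hω j i) (hP hp)
  have htot : ∀ p ∈ P, ∑ ω, p ω = ∑ ω, μ i ω := fun p hp => (hprob p hp).2.trans (hμ i).2.symm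
  have hmassE : 0 < prMass (μ i) E := (hE i).1
  have hmassEc : 0 < prMass (μ i) Eᶜ := by
    linarith [(hE i).2, prMass_add_prMass_compl (μ i) E, (hμ i).2]
  refine ⟨p1, hp1, prMass_eq_condMix_of_eqOn_compl ((heq p1 hp1).trans (heq p2 hp2).symm)
    ((heq p1 hp1).trans (heq p3 hp3).symm) ((htot p1 hp1).trans (htot p3 hp3).symm) ?_ ?_⟩
  · exact (prMass_congr_of_eqOn_compl (heq p1 hp1) (htot p1 hp1)).symm ▸ hmassE.ne'
  · exact (prMass_compl_congr (heq p2 hp2)).symm ▸ hmassEc.ne'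
end

section
/- Every monotone, constant-linear functional J : ℝ² → ℝ is either of the form J(v₁,v₂) = max_{t ∈ T} [t·v₁ + (1−t)·v₂] for some nonempty closed set T ⊆ [0,1], or of the form J(v₁,v₂) = min_{t ∈ T'} [t·v₁ + (1−t)·v₂] for some nonempty closed set T' ⊆ [0,1]. Moreover, T (resp. T') may be taken to have at most two elements. -/
theorem stmt_5 (J : ℝ → ℝ → ℝ)
    (hmono : ∀ v₁ v₂ w₁ w₂ : ℝ, v₁ ≤ w₁ → v₂ ≤ w₂ → J v₁ v₂ ≤ J w₁ w₂)
    (hcl : ∀ (v₁ v₂ β c : ℝ), 0 < β → J (β * v₁ + c) (β * v₂ + c) = β * J v₁ v₂ + c) :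
    (∃ T : Finset ℝ, ∃ hT : T.Nonempty, T.card ≤ 2 ∧ (∀ t ∈ T, t ∈ Set.Icc (0:ℝ) 1) ∧
      ∀ v₁ v₂ : ℝ, J v₁ v₂ = T.sup' hT fun t => t * v₁ + (1 - t) * v₂) ∨
    (∃ T : Finset ℝ, ∃ hT : T.Nonempty, T.card ≤ 2 ∧ (∀ t ∈ T, t ∈ Set.Icc (0:ℝ) 1) ∧
      ∀ v₁ v₂ : ℝ, J v₁ v₂ = T.inf' hT fun t => t * v₁ + (1 - t) * v₂) := by
  have h00 : J 0 0 = 0 := by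
    have h := hcl 0 0 2 0 (by norm_num)
    simp only [mul_zero, add_zero, zero_add] at h
    linarith
  have hdiag : ∀ c : ℝ, J c c = c := by
    intro c
    have h := hcl 0 0 1 c (by norm_num)
    simp only [mul_zero, zero_add, one_mul, h00] at h
    linarith
  set a := J 1 0 with ha
  set b := 1 - J 0 1 with hb
  have ha0 : 0 ≤ a := by
    have := hmono 0 0 1 0 (by norm_num) le_rfl
    rw [h00] at this; exact this
  have ha1 : a ≤ 1 := by
    have := hmono 1 0 1 1 le_rfl (by norm_num)
    rw [hdiag 1] at this; exact this
  have hb0 : 0 ≤ b := by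
    have := hmono 0 1 1 1 (by norm_num) le_rfl
    rw [hdiag 1] at this; rw [hb]; linarith
  have hb1 : b ≤ 1 := by
    have := hmono 0 0 0 1 le_rfl (by norm_num)
    rw [h00] at this; rw [hb]; linarith
  have hgt : ∀ v₁ v₂ : ℝ, v₂ < v₁ → J v₁ v₂ = a * v₁ + (1 - a) * v₂ := by
    intro v₁ v₂ h
    have hh := hcl 1 0 (v₁ - v₂) v₂ (by linarith)
    rw [show (v₁ - v₂) * 1 + v₂ = v₁ by ring, show (v₁ - v₂) * 0 + v₂ = v₂ by ring] at hh
    rw [hh]; ring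
  have hlt : ∀ v₁ v₂ : ℝ, v₁ < v₂ → J v₁ v₂ = b * v₁ + (1 - b) * v₂ := by
    intro v₁ v₂ h
    have hh := hcl 0 1 (v₂ - v₁) v₁ (by linarith)
    rw [show (v₂ - v₁) * 0 + v₁ = v₁ by ring, show (v₂ - v₁) * 1 + v₁ = v₂ by ring] at hh
    rw [hh, hb]; ring
  have hT : ({a, b} : Finset ℝ).Nonempty := ⟨a, by simp⟩
  have hcard : ({a, b} : Finset ℝ).card ≤ 2 :=
    (Finset.card_insert_le _ _).trans (by simp)
  have hmem : ∀ t ∈ ({a, b} : Finset ℝ), t ∈ Set.Icc (0:ℝ) 1 := by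
    intro t ht
    simp only [Finset.mem_insert, Finset.mem_singleton] at ht
    rcases ht with rfl | rfl
    · exact ⟨ha0, ha1⟩
    · exact ⟨hb0, hb1⟩
  rcases le_total a b with hab | hab
  · right
    refine ⟨{a, b}, hT, hcard, hmem, fun v₁ v₂ => ?_⟩
    have hinf : (({a, b} : Finset ℝ).inf' hT fun t => t * v₁ + (1 - t) * v₂) =
        min (a * v₁ + (1 - a) * v₂) (b * v₁ + (1 - b) * v₂) := by
      simp [Finset.inf'_insert]
    rw [hinf]
    rcases lt_trichotomy v₁ v₂ with h | h | h
    · rw [hlt v₁ v₂ h, min_eq_right (by nlinarith)]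
    · subst h; rw [hdiag, min_eq_right (by nlinarith)]; ring
    · rw [hgt v₁ v₂ h, min_eq_left (by nlinarith)]
  · left
    refine ⟨{a, b}, hT, hcard, hmem, fun v₁ v₂ => ?_⟩
    have hsup : (({a, b} : Finset ℝ).sup' hT fun t => t * v₁ + (1 - t) * v₂) =
        max (a * v₁ + (1 - a) * v₂) (b * v₁ + (1 - b) * v₂) := by
      simp [Finset.sup'_insert]
    rw [hsup]
    rcases lt_trichotomy v₁ v₂ with h | h | h
    · rw [hlt v₁ v₂ h, max_eq_right (by nlinarith)]
    · subst h; rw [hdiag, max_eq_right (by nlinarith)]; ring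
    · rw [hgt v₁ v₂ h, max_eq_left (by nlinarith)]
end

section
/- Let J : ℝ² → ℝ be strongly monotone and constant linear. Then there exist t, t' ∈ (0,1) such that J(v₁,v₂) = t·v₁ + (1−t)·v₂ whenever v₁ ≥ v₂, and J(v₁,v₂) = t'·v₁ + (1−t')·v₂ whenever v₁ < v₂. -/
/-!
Constant linearity forces `J v v = v` and, for `v₂ ≤ v₁`, writing `(v₁, v₂) = (v₁ - v₂) • (1, 0) + v₂ • (1, 1)`
gives `J v₁ v₂ = t v₁ + (1 - t) v₂` with `t = J 1 0`; strong monotonicity along `(0,0) < (1,0) < (1,1)` gives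
`0 < t < 1`. The case `v₁ < v₂` is the same argument for `(a, b) ↦ J b a`, with `t' = 1 - J 0 1`.
-/

def IsConstLinear (J : ℝ → ℝ → ℝ) : Prop :=
  ∀ v₁ v₂ β c : ℝ, 0 < β → J (β * v₁ + c) (β * v₂ + c) = β * J v₁ v₂ + c

def IsStrongMono (J : ℝ → ℝ → ℝ) : Prop :=
  ∀ v₁ v₂ w₁ w₂ : ℝ, v₁ ≤ w₁ → v₂ ≤ w₂ → (v₁, v₂) ≠ (w₁, w₂) → J v₁ v₂ < J w₁ w₂

variable {J : ℝ → ℝ → ℝ}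

namespace IsConstLinear

theorem swap (hJ : IsConstLinear J) : IsConstLinear fun a b ↦ J b a :=
  fun v₁ v₂ β c hβ ↦ hJ v₂ v₁ β c hβ

theorem apply_zero_zero (hJ : IsConstLinear J) : J 0 0 = 0 := by
  have h := hJ 0 0 2 0 two_pos
  simp only [mul_zero, add_zero] at h
  linarith

theorem apply_self (hJ : IsConstLinear J) (v : ℝ) : J v v = v := by
  simpa [hJ.apply_zero_zero] using hJ 0 0 1 v one_pos

theorem apply_of_le (hJ : IsConstLinear J) {v₁ v₂ : ℝ} (h : v₂ ≤ v₁) :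
    J v₁ v₂ = J 1 0 * v₁ + (1 - J 1 0) * v₂ := by
  rcases h.eq_or_lt with rfl | hlt
  · rw [hJ.apply_self]; ring
  · have h := hJ 1 0 (v₁ - v₂) v₂ (sub_pos.2 hlt)
    rw [mul_one, mul_zero, sub_add_cancel, zero_add] at h
    rw [h]; ring

end IsConstLinear

theorem IsStrongMono.swap (hJ : IsStrongMono J) : IsStrongMono fun a b ↦ J b a :=
  fun v₁ v₂ w₁ w₂ h₁ h₂ hne ↦ hJ v₂ v₁ w₂ w₁ h₂ h₁ fun h ↦ hne (by simp_all [Prod.ext_iff])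

theorem apply_one_zero_mem_Ioo (hm : IsStrongMono J) (hl : IsConstLinear J) :
    J 1 0 ∈ Set.Ioo 0 1 := by
  have hlow := hm 0 0 1 0 zero_le_one le_rfl (by simp)
  have hhigh := hm 1 0 1 1 le_rfl zero_le_one (by simp)
  rw [hl.apply_zero_zero] at hlow
  rw [hl.apply_self] at hhigh
  exact ⟨hlow, hhigh⟩

theorem stmt_6 (J : ℝ → ℝ → ℝ)
    (hsmono : ∀ v₁ v₂ w₁ w₂ : ℝ, v₁ ≤ w₁ → v₂ ≤ w₂ → (v₁, v₂) ≠ (w₁, w₂) →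
      J v₁ v₂ < J w₁ w₂)
    (hcl : ∀ (v₁ v₂ β c : ℝ), 0 < β → J (β * v₁ + c) (β * v₂ + c) = β * J v₁ v₂ + c) :
    ∃ t t' : ℝ, t ∈ Set.Ioo (0:ℝ) 1 ∧ t' ∈ Set.Ioo (0:ℝ) 1 ∧
      (∀ v₁ v₂ : ℝ, v₂ ≤ v₁ → J v₁ v₂ = t * v₁ + (1 - t) * v₂) ∧
      (∀ v₁ v₂ : ℝ, v₁ < v₂ → J v₁ v₂ = t' * v₁ + (1 - t') * v₂) := by
  have hm : IsStrongMono J := hsmono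
  have hl : IsConstLinear J := hcl
  obtain ⟨hs₀, hs₁⟩ := apply_one_zero_mem_Ioo hm.swap hl.swap
  refine ⟨J 1 0, 1 - J 0 1, apply_one_zero_mem_Ioo hm hl, ⟨by linarith, by linarith⟩,
    fun _ _ h ↦ hl.apply_of_le h, fun v₁ v₂ h ↦ ?_⟩
  rw [hl.swap.apply_of_le h.le]
  ring
end

section
/- Let I : ℝⁿ → ℝ be monotone, constant linear, and concave. Then for all a ∈ ℝⁿ, I(a) = min_{λ ∈ Λ} λ·a for some nonempty closed convex set Λ of probability vectors on {1,...,n} (i.e., λ_i ≥ 0, Σλ_i = 1). -/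
/-!
Concavity and positive homogeneity make `I` superadditive, so `x ↦ -I (-x)` is sublinear and
Hahn–Banach, applied to `t • a ↦ t * I a` on the line through `a`, yields a linear functional
`l ⬝ᵥ ·` lying above `I` and touching it at `a`. Monotonicity forces `l ≥ 0` and translation
invariance forces `∑ i, l i = 1`, so `l` is a prior. Hence `I` is the lower envelope of the
closed convex set of priors whose expectation dominates `I`.
-/

open Matrix

section Superlinear

variable {E : Type*} [AddCommGroup E] [Module ℝ E] {I : E → ℝ}

theorem ConcaveOn.add_le_apply_add (hconc : ConcaveOn ℝ Set.univ I)
    (hhom : ∀ c : ℝ, 0 < c → ∀ x, I (c • x) = c * I x) (x y : E) :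
    I x + I y ≤ I (x + y) := by
  have hmid := hconc.2 (Set.mem_univ x) (Set.mem_univ y) (by norm_num : (0 : ℝ) ≤ 1 / 2)
    (by norm_num : (0 : ℝ) ≤ 1 / 2) (by norm_num)
  have hxy : x + y = (2 : ℝ) • ((1 / 2 : ℝ) • x + (1 / 2 : ℝ) • y) := by
    rw [smul_add, smul_smul, smul_smul]; norm_num
  rw [hxy, hhom 2 two_pos]
  simp only [smul_eq_mul] at hmid
  linarith

theorem exists_linearMap_ge_eq_of_superadditive
    (hhom : ∀ c : ℝ, 0 < c → ∀ x, I (c • x) = c * I x) (hadd : ∀ x y, I x + I y ≤ I (x + y))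
    (a : E) : ∃ g : E →ₗ[ℝ] ℝ, (∀ x, I x ≤ g x) ∧ g a = I a := by
  have hzero : I 0 = 0 := by
    have := hhom 2 two_pos 0
    rw [smul_zero] at this
    linarith
  have hker : ∀ c : ℝ, c • a = 0 → c • I a = 0 := by
    intro c hc
    rcases smul_eq_zero.1 hc with rfl | rfl
    · exact zero_smul ℝ _
    · rw [hzero, smul_zero]
  have hline : ∀ c : ℝ, c * I a ≤ -I (-(c • a)) := by
    intro c
    rcases lt_trichotomy c 0 with hc | rfl | hc
    · rw [← neg_smul, hhom _ (neg_pos.2 hc)]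
      linarith
    · simp [hzero]
    · rw [← smul_neg, hhom c hc]
      have := hadd a (-a)
      rw [add_neg_cancel, hzero] at this
      nlinarith
  obtain ⟨g, hgf, hgN⟩ := exists_extension_of_le_sublinear
    (LinearPMap.mkSpanSingleton' a (I a) hker) (fun x => -I (-x))
    (fun c hc x => by rw [← smul_neg, hhom c hc, mul_neg])
    (fun x y => by have := hadd (-x) (-y); rw [neg_add]; linarith)
    (by
      rintro ⟨x, hx⟩
      obtain ⟨c, rfl⟩ := Submodule.mem_span_singleton.1 hx
      rw [LinearPMap.mkSpanSingleton'_apply, smul_eq_mul]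
      exact hline c)
  refine ⟨g, fun x => ?_, ?_⟩
  · have := hgN (-x)
    rw [neg_neg, map_neg] at this
    linarith
  · rw [hgf ⟨a, Submodule.mem_span_singleton_self a⟩]
    exact LinearPMap.mkSpanSingleton'_apply_self a (I a) hker _

end Superlinear

section Priors

variable {ι : Type*} [Fintype ι] {I : (ι → ℝ) → ℝ}

def supportingPriors (I : (ι → ℝ) → ℝ) : Set (ι → ℝ) :=
  stdSimplex ℝ ι ∩ ⋂ x, {l | I x ≤ l ⬝ᵥ x}

theorem isClosed_supportingPriors : IsClosed (supportingPriors I) :=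
  (isClosed_stdSimplex ℝ ι).inter <| isClosed_iInter fun _ =>
    isClosed_le continuous_const (continuous_id.dotProduct continuous_const)

theorem convex_supportingPriors : Convex ℝ (supportingPriors I) :=
  (convex_stdSimplex ℝ ι).inter <| convex_iInter fun x =>
    convex_halfSpace_ge ⟨fun l m => add_dotProduct l m x, fun c l => smul_dotProduct c l x⟩ _

theorem mem_stdSimplex_of_le_dotProduct (hmono : Monotone I)
    (htrans : ∀ x (c : ℝ), I (x + c • 1) = I x + c) {l a : ι → ℝ}
    (hle : ∀ x, I x ≤ l ⬝ᵥ x) (heq : l ⬝ᵥ a = I a) : l ∈ stdSimplex ℝ ι := by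
  classical
  refine ⟨fun i => ?_, ?_⟩
  · have hup : I a ≤ I (a + Pi.single i 1) :=
      hmono (le_add_of_nonneg_right (Pi.single_nonneg.2 zero_le_one))
    have := hle (a + Pi.single i 1)
    rw [dotProduct_add, dotProduct_single_one] at this
    linarith
  · have hshift : ∀ c : ℝ, c ≤ c * ∑ i, l i := by
      intro c
      have := hle (a + c • 1)
      rw [htrans, dotProduct_add, dotProduct_smul, dotProduct_one, smul_eq_mul] at this
      linarith
    linarith [hshift 1, hshift (-1)]

theorem isLeast_image_dotProduct_supportingPriors (hmono : Monotone I)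
    (htrans : ∀ x (c : ℝ), I (x + c • 1) = I x + c)
    (hhom : ∀ c : ℝ, 0 < c → ∀ x, I (c • x) = c * I x) (hadd : ∀ x y, I x + I y ≤ I (x + y))
    (a : ι → ℝ) : IsLeast ((· ⬝ᵥ a) '' supportingPriors I) (I a) := by
  classical
  obtain ⟨g, hge, hga⟩ := exists_linearMap_ge_eq_of_superadditive hhom hadd a
  obtain ⟨l, rfl⟩ := (dotProductEquiv ℝ ι).surjective g
  simp only [dotProductEquiv_apply_apply] at hge hga
  refine ⟨⟨l, ⟨mem_stdSimplex_of_le_dotProduct hmono htrans hge hga, ?_⟩, hga⟩, ?_⟩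
  · exact Set.mem_iInter.2 hge
  · rintro _ ⟨m, hm, rfl⟩
    exact Set.mem_iInter.1 hm.2 a

end Priors

theorem stmt_10 (n : ℕ) (I : (Fin n → ℝ) → ℝ)
    (hmono : ∀ a b : Fin n → ℝ, (∀ i, a i ≤ b i) → I a ≤ I b)
    (hcl : ∀ (a : Fin n → ℝ) (β c : ℝ), 0 < β →
      I (fun i => β * a i + c) = β * I a + c)
    (hconc : ∀ (a b : Fin n → ℝ) (α : ℝ), α ∈ Set.Icc (0:ℝ) 1 →
      α * I a + (1 - α) * I b ≤ I (fun i => α * a i + (1 - α) * b i)) :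
    ∃ Λ : Set (Fin n → ℝ), Λ.Nonempty ∧ IsClosed Λ ∧ Convex ℝ Λ ∧
      (∀ l ∈ Λ, (∀ i, 0 ≤ l i) ∧ ∑ i, l i = 1) ∧
      ∀ a : Fin n → ℝ, IsLeast ((fun l : Fin n → ℝ => ∑ i, l i * a i) '' Λ) (I a) := by
  have htrans : ∀ x (c : ℝ), I (x + c • 1) = I x + c := fun x c => by
    rw [show x + c • 1 = fun i => 1 * x i + c by ext; simp, hcl x 1 c one_pos, one_mul]
  have hhom : ∀ c : ℝ, 0 < c → ∀ x, I (c • x) = c * I x := fun c hc x => by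
    rw [show c • x = fun i => c * x i + 0 by ext; simp, hcl x c 0 hc, add_zero]
  have hconcave : ConcaveOn ℝ Set.univ I := by
    refine ⟨convex_univ, fun x _ y _ α β hα hβ hαβ => ?_⟩
    obtain rfl : β = 1 - α := by linarith
    exact hconc x y α ⟨hα, by linarith⟩
  have hleast := isLeast_image_dotProduct_supportingPriors (fun a b => hmono a b) htrans hhom
    (hconcave.add_le_apply_add hhom)
  exact ⟨supportingPriors I, Set.Nonempty.of_image ⟨_, (hleast 0).1⟩, isClosed_supportingPriors,
    convex_supportingPriors, fun l hl => hl.1, hleast⟩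
end

section
/- Bayesian conditioning of a linear pool does not generally commute with pooling: let Ω have at least 3 elements, λ₁ ∈ (0,1), μ₁ = (0.1, 0, 0.9, 0,...), μ₂ = ... = μₙ = (0, 1, 0, 0,...) (as probability vectors on Ω), and G an event containing states 1 and 2 but not state 3. Then the conditional pooled probability [Σ_i λ_i μ_i]^G assigns probability 0.1·λ₁/(1 − 0.9·λ₁) to state 1, the pool of conditionals Σ_i λ_i μ_i^G assigns probability λ₁ to state 1, and 0.1·λ₁/(1 − 0.9·λ₁) < λ₁; hence [Σ_i λ_i μ_i]^G ≠ Σ_i λ_i μ_i^G. -/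
noncomputable def condP {Ω : Type*} [Fintype Ω] [DecidableEq Ω]
    (p : Ω → ℝ) (E : Finset Ω) : Ω → ℝ :=
  fun ω => if ω ∈ E then p ω / ∑ x ∈ E, p x else 0

theorem condP_of_mem {Ω : Type*} [Fintype Ω] [DecidableEq Ω] {p : Ω → ℝ} {E : Finset Ω}
    {ω : Ω} (h : ω ∈ E) : condP p E ω = p ω / ∑ x ∈ E, p x :=
  if_pos h

theorem sum_mul_eq_of_forall_ne_eq {ι R : Type*} [Fintype ι] [DecidableEq ι] [CommRing R]
    {w f : ι → R} (hw : ∑ i, w i = 1) (z : ι) {b : R} (hf : ∀ i, i ≠ z → f i = b) :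
    ∑ i, w i * f i = w z * f z + (1 - w z) * b := by
  have hrest : ∑ i ∈ Finset.univ.erase z, w i = 1 - w z := by
    rw [← hw, ← Finset.add_sum_erase _ _ (Finset.mem_univ z), add_sub_cancel_left]
  rw [← Finset.add_sum_erase _ _ (Finset.mem_univ z), ← hrest, Finset.sum_mul]
  congr 1
  exact Finset.sum_congr rfl fun i hi => by rw [hf i (Finset.ne_of_mem_erase hi), mul_comm]

theorem sum_ite_eq_ite_eq_of_mem_of_notMem {Ω M : Type*} [DecidableEq Ω] [AddCommMonoid M]
    {E : Finset Ω} {a b : Ω} (ha : a ∈ E) (hb : b ∉ E) (c d : M) :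
    ∑ x ∈ E, (if x = a then c else if x = b then d else 0) = c := by
  rw [Finset.sum_congr rfl fun x hx => by rw [if_neg (ne_of_mem_of_not_mem hx hb)],
    Finset.sum_ite_eq', if_pos ha]

theorem mul_div_mul_add_one_sub_lt {c L : ℝ} (hc0 : 0 ≤ c) (hc1 : c < 1) (hL0 : 0 < L)
    (hL1 : L < 1) : c * L / (c * L + (1 - L)) < L := by
  rw [div_lt_iff₀ (by nlinarith)]
  nlinarith [mul_pos (sub_pos.2 hc1) (sub_pos.2 hL1)]

theorem stmt_14 {Ω : Type*} [Fintype Ω] [DecidableEq Ω]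
    (s1 s2 s3 : Ω) (h12 : s1 ≠ s2)
    (n : ℕ) (hn : 2 ≤ n)
    (lam : Fin n → ℝ) (hlam1 : ∑ i, lam i = 1)
    (hlam : lam ⟨0, by omega⟩ ∈ Set.Ioo (0:ℝ) 1)
    (μ : Fin n → Ω → ℝ)
    (hμ1 : μ ⟨0, by omega⟩ = fun ω => if ω = s1 then 0.1 else if ω = s3 then 0.9 else 0)
    (hμi : ∀ i : Fin n, i ≠ ⟨0, by omega⟩ → μ i = fun ω => if ω = s2 then 1 else 0)
    (G : Finset Ω) (hG1 : s1 ∈ G) (hG2 : s2 ∈ G) (hG3 : s3 ∉ G) :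
    condP (fun ω => ∑ i, lam i * μ i ω) G s1
        = 0.1 * lam ⟨0, by omega⟩ / (1 - 0.9 * lam ⟨0, by omega⟩) ∧
    (∑ i, lam i * condP (μ i) G s1) = lam ⟨0, by omega⟩ ∧
    0.1 * lam ⟨0, by omega⟩ / (1 - 0.9 * lam ⟨0, by omega⟩) < lam ⟨0, by omega⟩ ∧
    condP (fun ω => ∑ i, lam i * μ i ω) G
      ≠ fun ω => ∑ i, lam i * condP (μ i) G ω := by
  set z : Fin n := ⟨0, by omega⟩
  obtain ⟨hL0, hL1⟩ := hlam
  have hmass_z : ∑ x ∈ G, μ z x = 0.1 := by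
    rw [hμ1]; exact sum_ite_eq_ite_eq_of_mem_of_notMem hG1 hG3 _ _
  have hpool_s1 : ∑ i, lam i * μ i s1 = lam z * 0.1 + (1 - lam z) * 0 := by
    rw [sum_mul_eq_of_forall_ne_eq hlam1 z (b := 0) fun i hi => by simp [hμi i hi, h12]]
    simp [hμ1]
  have hpool_G : ∑ x ∈ G, ∑ i, lam i * μ i x = lam z * 0.1 + (1 - lam z) * 1 := by
    rw [Finset.sum_comm]
    simp_rw [← Finset.mul_sum]
    rw [sum_mul_eq_of_forall_ne_eq hlam1 z (b := 1) fun i hi => by simp [hμi i hi, hG2], hmass_z]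
  have hcond_pool : condP (fun ω => ∑ i, lam i * μ i ω) G s1
      = 0.1 * lam z / (1 - 0.9 * lam z) := by
    rw [condP_of_mem hG1, hpool_s1, hpool_G]
    congr 1 <;> ring
  have hpool_cond : ∑ i, lam i * condP (μ i) G s1 = lam z := by
    have hcond_i : ∀ i, i ≠ z → condP (μ i) G s1 = 0 := fun i hi => by
      simp [condP_of_mem hG1, hμi i hi, h12]
    rw [sum_mul_eq_of_forall_ne_eq hlam1 z hcond_i, condP_of_mem hG1, hmass_z, hμ1]
    norm_num
  have hlt : 0.1 * lam z / (1 - 0.9 * lam z) < lam z := by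
    convert mul_div_mul_add_one_sub_lt (c := 0.1) (by norm_num) (by norm_num) hL0 hL1 using 2
    ring
  exact ⟨hcond_pool, hpool_cond, hlt, fun h => hlt.ne (hcond_pool ▸ hpool_cond ▸ congrFun h s1)⟩
end

section
/- Let I : ℝⁿ → ℝ be a monotone functional satisfying: for all a ∈ ℝⁿ, β ∈ (0,1), c ∈ ℝ, I(β·a + (1−β)·c·1ₙ) = β·I(a) + (1−β)·c, and I(c·1ₙ) = c. Then I is constant linear: I(β·a + c·1ₙ) = β·I(a) + c for all β > 0 and c ∈ ℝ. -/
theorem stmt_15 (n : ℕ) (I : (Fin n → ℝ) → ℝ)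
    (hmono : ∀ a b : Fin n → ℝ, (∀ i, a i ≤ b i) → I a ≤ I b)
    (hmix : ∀ (a : Fin n → ℝ) (β c : ℝ), β ∈ Set.Ioo (0:ℝ) 1 →
      I (fun i => β * a i + (1 - β) * c) = β * I a + (1 - β) * c)
    (hconst : ∀ c : ℝ, I (fun _ => c) = c) :
    ∀ (a : Fin n → ℝ) (β c : ℝ), 0 < β → I (fun i => β * a i + c) = β * I a + c := by
  intro a β c hβ
  rcases lt_trichotomy β 1 with h1 | h1 | h1
  · -- β < 1
    have hne : (1:ℝ) - β ≠ 0 := by linarith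
    have hc : (1 - β) * (c / (1 - β)) = c := by field_simp
    have key : (fun i => β * a i + c) = (fun i => β * a i + (1 - β) * (c / (1 - β))) := by
      funext i; rw [hc]
    rw [key, hmix a β _ ⟨hβ, h1⟩, hc]
  · -- β = 1
    subst h1
    have half : (1/2 : ℝ) ∈ Set.Ioo (0:ℝ) 1 := by norm_num
    have h1 := hmix (fun i => 1 * a i + c) (1/2) (-c) half
    have h2 := hmix a (1/2) 0 half
    have key : (fun i => (1/2 : ℝ) * ((fun i => 1 * a i + c) i) + (1 - 1/2) * (-c))
        = (fun i => (1/2 : ℝ) * a i + (1 - 1/2) * 0) := by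
      funext i; ring
    rw [key, h2] at h1
    linarith
  · -- β > 1
    have hβne : β ≠ 0 := ne_of_gt hβ
    have hγ : (1/β : ℝ) ∈ Set.Ioo (0:ℝ) 1 := by
      constructor
      · positivity
      · rw [div_lt_one hβ]; exact h1
    have hne : (1:ℝ) - 1/β ≠ 0 := by
      have := hγ.2; intro h; linarith
    have hb1 : β - 1 ≠ 0 := by intro h; linarith
    have hd := hmix (fun i => β * a i + c) (1/β) (-((1/β) * c) / (1 - 1/β)) hγ
    have key : (fun i => (1/β) * ((fun i => β * a i + c) i) + (1 - 1/β) * (-((1/β) * c) / (1 - 1/β)))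
        = a := by
      funext i
      field_simp
      ring
    have hsimp : (1 - 1/β) * (-((1/β) * c) / (1 - 1/β)) = -((1/β) * c) := by
      rw [mul_div_cancel₀ _ hne]
    rw [key, hsimp] at hd
    have hβγ : (1/β) * β = 1 := by field_simp
    have : β * I a = β * ((1/β) * I (fun i => β * a i + c) + -((1/β) * c)) := by rw [hd]
    have hc2 : β * -((1/β) * c) = -c := by field_simp
    rw [mul_add, ← mul_assoc, mul_one_div_cancel hβne, one_mul, hc2] at this
    linarith
end

section
/- Let I : ℝⁿ → ℝ be monotone and mixture linear, i.e., I(β·a + (1−β)·b) = β·I(a) + (1−β)·I(b) for all a, b ∈ ℝⁿ and β ∈ (0,1), and I(c·1ₙ) = c for all c ∈ ℝ. Then there exists a probability vector λ ∈ Δ({1,...,n}) such that I(a) = Σ_i λ_i·a_i for all a ∈ ℝⁿ. -/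
theorem stmt_16 (n : ℕ) (I : (Fin n → ℝ) → ℝ)
    (hmono : ∀ a b : Fin n → ℝ, (∀ i, a i ≤ b i) → I a ≤ I b)
    (hmix : ∀ (a b : Fin n → ℝ) (β : ℝ), β ∈ Set.Ioo (0:ℝ) 1 →
      I (fun i => β * a i + (1 - β) * b i) = β * I a + (1 - β) * I b)
    (hconst : ∀ c : ℝ, I (fun _ => c) = c) :
    ∃ lam : Fin n → ℝ, (∀ i, 0 ≤ lam i) ∧ ∑ i, lam i = 1 ∧
      ∀ a : Fin n → ℝ, I a = ∑ i, lam i * a i := by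
  have h0 : I 0 = 0 := by exact hconst 0
  have hhalf : ∀ a b : Fin n → ℝ,
      I (fun i => (1/2) * a i + (1/2) * b i) = (1/2) * I a + (1/2) * I b := by
    intro a b
    have := hmix a b (1/2) ⟨by norm_num, by norm_num⟩
    norm_num at this ⊢
    convert this using 2
  have hpos : ∀ t : ℝ, 0 < t → ∀ a : Fin n → ℝ,
      I (fun i => t * a i) = t * I a := by
    intro t ht a
    rcases lt_trichotomy t 1 with h1 | h1 | h1
    · have := hmix a 0 t ⟨ht, h1⟩
      simpa [h0] using this
    · subst h1; simp
    · have hβ : (1/t : ℝ) ∈ Set.Ioo (0:ℝ) 1 := by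
        constructor
        · positivity
        · rw [div_lt_one (by linarith)]; linarith
      have := hmix (fun i => t * a i) 0 (1/t) hβ
      have h2 : (fun i => (1/t) * (t * a i) + (1 - 1/t) * (0 : (Fin n → ℝ)) i) = a := by
        funext i
        field_simp
        simp
      rw [h2, h0] at this
      rw [mul_zero, add_zero] at this
      field_simp at this
      linarith [this]
  have hneg : ∀ a : Fin n → ℝ, I (fun i => - a i) = - I a := by
    intro a
    have := hhalf a (fun i => - a i)
    have h2 : (fun i => (1/2) * a i + (1/2) * (fun i => - a i) i) = (0 : Fin n → ℝ) := by
      funext i; simp only [Pi.zero_apply]; ring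
    rw [h2, h0] at this
    linarith [this]
  have hsmul : ∀ (t : ℝ) (a : Fin n → ℝ), I (fun i => t * a i) = t * I a := by
    intro t a
    rcases lt_trichotomy t 0 with h | h | h
    · have := hpos (-t) (by linarith) a
      have h2 : (fun i => t * a i) = (fun i => - ((-t) * a i)) := by
        funext i; ring
      rw [h2]
      have := hneg (fun i => (-t) * a i)
      rw [this, hpos (-t) (by linarith) a]
      ring
    · subst h; simpa using hconst 0
    · exact hpos t h a
  have hadd : ∀ a b : Fin n → ℝ, I (a + b) = I a + I b := by
    intro a b
    have h2 : (a + b) = (fun i => 2 * ((1/2) * a i + (1/2) * b i)) := by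
      funext i; simp [Pi.add_apply]; ring
    rw [h2, hpos 2 (by norm_num) _, hhalf]
    ring
  -- I is linear
  let L : (Fin n → ℝ) →ₗ[ℝ] ℝ :=
    { toFun := I
      map_add' := hadd
      map_smul' := fun t a => by exact hsmul t a }
  set lam : Fin n → ℝ := fun i => I (Pi.single i 1) with hlam
  have key : ∀ a : Fin n → ℝ, I a = ∑ i, lam i * a i := by
    intro a
    have ha : a = ∑ i, Pi.single i (a i) := (Finset.univ_sum_single a).symm
    calc I a = L a := rfl
      _ = L (∑ i, Pi.single i (a i)) := by rw [← ha]
      _ = ∑ i, L (Pi.single i (a i)) := map_sum L _ _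
      _ = ∑ i, lam i * a i := by
          refine Finset.sum_congr rfl fun i _ => ?_
          have : Pi.single i (a i) = (a i) • (Pi.single i (1:ℝ) : Fin n → ℝ) := by
            funext j
            by_cases h : j = i <;> simp [Pi.single_apply, h]
          rw [this, map_smul, smul_eq_mul]
          simp [hlam, L, mul_comm]
  refine ⟨lam, fun i => ?_, ?_, key⟩
  · have := hmono 0 (Pi.single i 1) (fun j => by
      by_cases h : j = i <;> simp [Pi.single_apply, h])
    simpa [h0, hlam] using this
  · have := key (fun _ => 1)
    rw [hconst 1] at this
    simpa using this.symm
end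

section
/- Let I : ℝⁿ → ℝ be monotone, constant linear, and quasi-concave (I(a) = I(b) implies I(α·a + (1−α)·b) ≥ I(a) for α ∈ (0,1)). Then I is concave. -/
/-!
Constant additivity lets us shift `b` by the constant `I a - I b` so that both points lie on the
same level set of `I`; quasi-concavity then bounds `I` at the mixture from below by `I a`, and
shifting back costs exactly `(1 - α) (I a - I b)`, which is the concavity inequality.
-/

section

variable {ι : Type*} {I : (ι → ℝ) → ℝ}

lemma apply_add_const_of_constLinear
    (hcl : ∀ (a : ι → ℝ) (β c : ℝ), 0 < β → I (fun i => β * a i + c) = β * I a + c)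
    (a : ι → ℝ) (c : ℝ) : I (fun i => a i + c) = I a + c := by
  simpa using hcl a 1 c one_pos

lemma convex_comb_le_of_constAdditive_of_quasiconcave
    (hadd : ∀ (a : ι → ℝ) (c : ℝ), I (fun i => a i + c) = I a + c)
    (hqc : ∀ (a b : ι → ℝ) (α : ℝ), α ∈ Set.Ioo (0:ℝ) 1 → I a = I b →
      I a ≤ I (fun i => α * a i + (1 - α) * b i))
    (a b : ι → ℝ) {α : ℝ} (hα : α ∈ Set.Ioo (0:ℝ) 1) :
    α * I a + (1 - α) * I b ≤ I (fun i => α * a i + (1 - α) * b i) := by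
  set c := I a - I b
  have hlevel : I a = I (fun i => b i + c) := by rw [hadd]; ring
  have hshift : I (fun i => α * a i + (1 - α) * (b i + c)) =
      I (fun i => α * a i + (1 - α) * b i) + (1 - α) * c := by
    rw [← hadd]; congr 1; funext i; ring
  have hmix := hqc a _ α hα hlevel
  rw [hshift] at hmix
  linarith

end

theorem stmt_17_general (n : ℕ) (I : (Fin n → ℝ) → ℝ)
    (hcl : ∀ (a : Fin n → ℝ) (β c : ℝ), 0 < β →
      I (fun i => β * a i + c) = β * I a + c)
    (hqc : ∀ (a b : Fin n → ℝ) (α : ℝ), α ∈ Set.Ioo (0:ℝ) 1 → I a = I b →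
      I a ≤ I (fun i => α * a i + (1 - α) * b i)) :
    ∀ (a b : Fin n → ℝ) (α : ℝ), α ∈ Set.Icc (0:ℝ) 1 →
      α * I a + (1 - α) * I b ≤ I (fun i => α * a i + (1 - α) * b i) := by
  rintro a b α ⟨h0, h1⟩
  rcases h0.eq_or_lt with rfl | h0
  · simp
  rcases h1.eq_or_lt with rfl | h1
  · simp
  exact convex_comb_le_of_constAdditive_of_quasiconcave
    (apply_add_const_of_constLinear hcl) hqc a b ⟨h0, h1⟩

theorem stmt_17 (n : ℕ) (I : (Fin n → ℝ) → ℝ)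
    (hmono : ∀ a b : Fin n → ℝ, (∀ i, a i ≤ b i) → I a ≤ I b)
    (hcl : ∀ (a : Fin n → ℝ) (β c : ℝ), 0 < β →
      I (fun i => β * a i + c) = β * I a + c)
    (hqc : ∀ (a b : Fin n → ℝ) (α : ℝ), α ∈ Set.Ioo (0:ℝ) 1 → I a = I b →
      I a ≤ I (fun i => α * a i + (1 - α) * b i)) :
    ∀ (a b : Fin n → ℝ) (α : ℝ), α ∈ Set.Icc (0:ℝ) 1 →
      α * I a + (1 - α) * I b ≤ I (fun i => α * a i + (1 - α) * b i) :=
  stmt_17_general n I hcl hqc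
end

section
/- Let Λ ⊆ Δ({1,...,n}) be a nonempty compact set of weight vectors and define I(a) = min_{λ∈Λ} λ·a for a ∈ ℝⁿ. Let μ₁,...,μₙ be probability measures on finite Ω with μ_i(E) = α ∈ (0,1) for all i and define, for v : Ω → ℝ, U(v) = min_{λ∈Λ} E_{Σλ_iμ_i}[v]. Then for any u, x : Ω → ℝ with x constant equal to c, if min_{λ∈Λ} E_{Σλ_iμ_i^E}[u] ≥ c, then for every h : Ω → ℝ, U(u·1_E + h·1_{Eᶜ}) ≥ U(c·1_E + h·1_{Eᶜ}), where v·1_E + w·1_{Eᶜ} is the function equal to v on E and w on Eᶜ. -/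
lemma aux_set_eq {n : ℕ} (Λ : Set (Fin n → ℝ)) (F : (Fin n → ℝ) → ℝ) :
    {x | ∃ l ∈ Λ, x = F l} = F '' Λ := by
  ext x; simp [eq_comm, Set.mem_image]

lemma aux_cont {Ω : Type*} [Fintype Ω] (n : ℕ) (ν : Fin n → Ω → ℝ) (v : Ω → ℝ) :
    Continuous (fun l : Fin n → ℝ => ∑ ω, (∑ i, l i * ν i ω) * v ω) := by
  fun_prop

theorem stmt_18 {Ω : Type*} [Fintype Ω] [DecidableEq Ω] (n : ℕ)
    (Λ : Set (Fin n → ℝ)) (hne : Λ.Nonempty) (hcomp : IsCompact Λ)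
    (hw : ∀ l ∈ Λ, (∀ i, 0 ≤ l i) ∧ ∑ i, l i = 1)
    (μ : Fin n → Ω → ℝ) (hμ : ∀ i, IsProb (μ i))
    (E : Finset Ω) (α : ℝ) (hα : α ∈ Set.Ioo (0:ℝ) 1)
    (hE : ∀ i, ∑ ω ∈ E, μ i ω = α)
    (u : Ω → ℝ) (c : ℝ)
    (hmin : c ≤ sInf {x : ℝ | ∃ l ∈ Λ, x = ∑ ω, (∑ i, l i * condP (μ i) E ω) * u ω}) :
    ∀ h : Ω → ℝ,
      sInf {x : ℝ | ∃ l ∈ Λ,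
          x = ∑ ω, (∑ i, l i * μ i ω) * (if ω ∈ E then c else h ω)}
        ≤ sInf {x : ℝ | ∃ l ∈ Λ,
            x = ∑ ω, (∑ i, l i * μ i ω) * (if ω ∈ E then u ω else h ω)} := by
  intro h
  obtain ⟨hα0, hα1⟩ := hα
  set Fg : (Fin n → ℝ) → ℝ := fun l => ∑ ω, (∑ i, l i * condP (μ i) E ω) * u ω with hFg
  set Fc : (Fin n → ℝ) → ℝ :=
    fun l => ∑ ω, (∑ i, l i * μ i ω) * (if ω ∈ E then c else h ω) with hFc
  set Fu : (Fin n → ℝ) → ℝ :=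
    fun l => ∑ ω, (∑ i, l i * μ i ω) * (if ω ∈ E then u ω else h ω) with hFu
  have hgc : Continuous Fg := aux_cont n (fun i => condP (μ i) E) u
  have hcc : Continuous Fc := aux_cont n μ _
  have huc : Continuous Fu := aux_cont n μ _
  have hbd : ∀ F : (Fin n → ℝ) → ℝ, Continuous F → BddBelow {x | ∃ l ∈ Λ, x = F l} := by
    intro F hF
    rw [aux_set_eq]
    exact (hcomp.image hF).bddBelow
  -- for each l in Λ, c ≤ Fg l
  have hcg : ∀ l ∈ Λ, c ≤ Fg l := by
    intro l hl
    refine le_trans hmin (csInf_le (hbd Fg hgc) ?_)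
    exact ⟨l, hl, rfl⟩
  -- key pointwise inequality
  have hkey : ∀ l ∈ Λ, Fc l ≤ Fu l := by
    intro l hl
    have hsplit : ∀ v : Ω → ℝ,
        (∑ ω, (∑ i, l i * μ i ω) * (if ω ∈ E then v ω else h ω))
          = (∑ ω ∈ E, (∑ i, l i * μ i ω) * v ω)
            + ∑ ω ∈ Eᶜ, (∑ i, l i * μ i ω) * h ω := by
      intro v
      rw [← Finset.sum_add_sum_compl E]
      congr 1
      · exact Finset.sum_congr rfl fun ω hω => by simp [hω]
      · exact Finset.sum_congr rfl fun ω hω => by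
          simp [Finset.mem_compl.mp hω]
    rw [hFc, hFu]
    simp only [hsplit]
    gcongr ?_ + _
    -- ∑_{ω∈E} (∑ λμ) c ≤ ∑_{ω∈E} (∑ λμ) u
    have hEc : (∑ ω ∈ E, (∑ i, l i * μ i ω) * c) = α * c := by
      rw [← Finset.sum_mul, Finset.sum_comm]
      simp only [← Finset.mul_sum, hE]
      rw [← Finset.sum_mul, (hw l hl).2, one_mul]
    have hEu : (∑ ω ∈ E, (∑ i, l i * μ i ω) * u ω) = α * Fg l := by
      have h1 : Fg l = ∑ ω ∈ E, (∑ i, l i * (μ i ω / α)) * u ω := by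
        have hvan := Finset.sum_subset (Finset.subset_univ E)
          (f := fun ω => (∑ i, l i * condP (μ i) E ω) * u ω)
          (fun ω _ hω => by
            have hz : ∀ i, condP (μ i) E ω = 0 := fun i => by simp [condP, hω]
            simp [hz])
        rw [hFg]
        dsimp only
        rw [← hvan]
        refine Finset.sum_congr rfl fun ω hω => ?_
        simp [condP, hω, hE]
      rw [h1, Finset.mul_sum]
      refine Finset.sum_congr rfl fun ω hω => ?_
      have h2 : α * ∑ i, l i * (μ i ω / α) = ∑ i, l i * μ i ω := by
        rw [Finset.mul_sum]
        refine Finset.sum_congr rfl fun i _ => by field_simp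
      rw [← h2]; ring
    rw [hEc, hEu]
    exact mul_le_mul_of_nonneg_left (hcg l hl) hα0.le
  -- conclude
  have hSu_ne : {x | ∃ l ∈ Λ, x = Fu l}.Nonempty := by
    obtain ⟨l, hl⟩ := hne
    exact ⟨Fu l, l, hl, rfl⟩
  refine le_csInf hSu_ne ?_
  rintro x ⟨l, hl, rfl⟩
  calc sInf {x | ∃ l ∈ Λ, x = Fc l} ≤ Fc l := csInf_le (hbd Fc hcc) ⟨l, hl, rfl⟩
    _ ≤ Fu l := hkey l hl
end
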